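/- For positive semi-definite d×d matrices A and B, λ(A) is weakly log-majorized by λ(B) (i.e., prod_{i=1}^k λ_i(A) ≤ prod_{i=1}^k λ_i(B) for all k in [d]) if and only if ‖A^p‖_{(k)} ≤ ‖B^p‖_{(k)} for all p > 0 and all k in [d]. -/

import Mathlib

open scoped BigOperators ComplexOrder

/-- The eigenvalues of a Hermitian matrix arranged in decreasing order
(counting multiplicities). -/
noncomputable def eigDesc {d : ℕ} {A : Matrix (Fin d) (Fin d) ℂ} (hA : A.IsHermitian) :
    Fin d → ℝ :=
  fun i => (hA.eigenvalues ∘ Tuple.sort hA.eigenvalues) i.rev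

/-!
Write `a, b` for the decreasing eigenvalue sequences of `A, B`.

If `∏_{i<l} a_i ≤ ∏_{i<l} b_i` for all `l ≤ k` and `a_0, …, a_{k-1} > 0`, then the partial sums
of `u_i = log b_i - log a_i` are nonnegative. By convexity of `exp`,
`b_i^p - a_i^p ≥ p a_i^p u_i`, and since the weights `a_i^p` decrease, summation by parts gives
`∑_{i<k} a_i^p u_i ≥ 0`. A vanishing `a_i` only removes terms from the left-hand side.

Conversely, if `∑_{i<k} a_i^p ≤ ∑_{i<k} b_i^p` for all `p > 0` and all `a_i > 0`, letting
`p → 0⁺` first shows that no `b_i` vanishes (the left side tends to `k`, the right side to the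
number of nonzero `b_i`), and then comparing the derivatives at `p = 0` of both sides, which agree
there, gives `∑ log a_i ≤ ∑ log b_i`.
-/

open Finset Real Filter Topology

lemma mul_rpow_mul_log_sub_log_le_rpow_sub_rpow {x y : ℝ} (hx : 0 < x) (hy : 0 < y) (p : ℝ) :
    p * x ^ p * (log y - log x) ≤ y ^ p - x ^ p := by
  have hxp : 0 < x ^ p := rpow_pos_of_pos hx p
  have hlog : log (y ^ p / x ^ p) = p * (log y - log x) := by
    rw [log_div (rpow_pos_of_pos hy p).ne' hxp.ne', log_rpow hy, log_rpow hx]; ring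
  calc p * x ^ p * (log y - log x) = x ^ p * log (y ^ p / x ^ p) := by rw [hlog]; ring
    _ ≤ x ^ p * (y ^ p / x ^ p - 1) := mul_le_mul_of_nonneg_left
        (log_le_sub_one_of_pos (div_pos (rpow_pos_of_pos hy p) hxp)) hxp.le
    _ = y ^ p - x ^ p := by rw [mul_sub, mul_div_cancel₀ _ hxp.ne', mul_one]

lemma sum_range_mul_nonneg_of_antitone {c u : ℕ → ℝ} {k : ℕ} (hc : Antitone c)
    (hc0 : ∀ i, 0 ≤ c i) (hu : ∀ l ≤ k, 0 ≤ ∑ i ∈ range l, u i) :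
    0 ≤ ∑ i ∈ range k, c i * u i := by
  have hparts := sum_range_by_parts c u k
  simp only [smul_eq_mul] at hparts
  rw [hparts, sub_nonneg]
  calc ∑ i ∈ range (k - 1), (c (i + 1) - c i) * ∑ j ∈ range (i + 1), u j
      ≤ 0 := sum_nonpos fun i hi => mul_nonpos_of_nonpos_of_nonneg
        (sub_nonpos.2 (hc i.le_succ)) (hu _ (by rw [mem_range] at hi; omega))
    _ ≤ c (k - 1) * ∑ i ∈ range k, u i := mul_nonneg (hc0 _) (hu k le_rfl)

section Forward

variable {a b : ℕ → ℝ} {k : ℕ}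

lemma pos_of_prod_range_le_prod_range (hb : ∀ i, 0 ≤ b i) (ha : ∀ i < k, 0 < a i)
    (hab : ∀ l ≤ k, ∏ i ∈ range l, a i ≤ ∏ i ∈ range l, b i) : ∀ i < k, 0 < b i := by
  intro i hi
  have hprod : 0 < ∏ j ∈ range (i + 1), b j :=
    (prod_pos fun j hj => ha j (by rw [mem_range] at hj; omega)).trans_le (hab _ hi)
  exact (hb i).lt_of_ne fun h => hprod.ne' (prod_eq_zero (self_mem_range_succ i) h.symm)

lemma sum_range_rpow_le_of_prod_range_le_of_pos (ha : Antitone a) (ha0 : ∀ i, 0 ≤ a i)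
    (hapos : ∀ i < k, 0 < a i) (hbpos : ∀ i < k, 0 < b i)
    (hab : ∀ l ≤ k, ∏ i ∈ range l, a i ≤ ∏ i ∈ range l, b i) {p : ℝ} (hp : 0 ≤ p) :
    ∑ i ∈ range k, a i ^ p ≤ ∑ i ∈ range k, b i ^ p := by
  have hlog : ∀ l ≤ k, 0 ≤ ∑ i ∈ range l, (log (b i) - log (a i)) := fun l hl => by
    have hsub : ∀ i ∈ range l, i < k := fun i hi => (mem_range.1 hi).trans_le hl
    rw [sum_sub_distrib, ← log_prod fun i hi => (hbpos i (hsub i hi)).ne',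
      ← log_prod fun i hi => (hapos i (hsub i hi)).ne', sub_nonneg]
    exact log_le_log (prod_pos fun i hi => hapos i (hsub i hi)) (hab l hl)
  have habel := sum_range_mul_nonneg_of_antitone (c := fun i => a i ^ p)
    (fun i j hij => rpow_le_rpow (ha0 j) (ha hij) hp) (fun i => rpow_nonneg (ha0 i) p) hlog
  have htangent : p * ∑ i ∈ range k, a i ^ p * (log (b i) - log (a i))
      ≤ ∑ i ∈ range k, (b i ^ p - a i ^ p) := by
    rw [mul_sum]
    refine sum_le_sum fun i hi => ?_
    rw [← mul_assoc]
    exact mul_rpow_mul_log_sub_log_le_rpow_sub_rpow (hapos i (mem_range.1 hi))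
      (hbpos i (mem_range.1 hi)) p
  rw [sum_sub_distrib] at htangent
  linarith [mul_nonneg hp habel]

lemma sum_range_rpow_le_of_prod_range_le (ha : Antitone a) (ha0 : ∀ i, 0 ≤ a i)
    (hb0 : ∀ i, 0 ≤ b i) {p : ℝ} (hp : 0 < p)
    (hab : ∀ l ≤ k, ∏ i ∈ range l, a i ≤ ∏ i ∈ range l, b i) :
    ∑ i ∈ range k, a i ^ p ≤ ∑ i ∈ range k, b i ^ p := by
  induction k with
  | zero => simp
  | succ k ih =>
    rcases (ha0 k).eq_or_lt with hak | hak
    · rw [sum_range_succ, sum_range_succ, ← hak, zero_rpow hp.ne', add_zero]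
      exact (ih fun l hl => hab l (hl.trans k.le_succ)).trans
        (le_add_of_nonneg_right (rpow_nonneg (hb0 k) p))
    · have hapos : ∀ i < k + 1, 0 < a i := fun i hi => hak.trans_le (ha (Nat.le_of_lt_succ hi))
      exact sum_range_rpow_le_of_prod_range_le_of_pos ha ha0 hapos
        (pos_of_prod_range_le_prod_range hb0 hapos hab) hab hp.le

end Forward

section Backward

variable {ι : Type*} {s : Finset ι} {a b : ι → ℝ}

lemma hasDerivAt_sum_rpow_zero (ha : ∀ i ∈ s, 0 < a i) :
    HasDerivAt (fun p : ℝ => ∑ i ∈ s, a i ^ p) (∑ i ∈ s, log (a i)) 0 := by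
  refine HasDerivAt.fun_sum fun i hi => ?_
  simpa using (hasStrictDerivAt_const_rpow (ha i hi) 0).hasDerivAt

lemma HasDerivAt.nonneg_of_forall_lt_le {g : ℝ → ℝ} {g' x : ℝ} (hg : HasDerivAt g g' x)
    (hmin : ∀ y, x < y → g x ≤ g y) : 0 ≤ g' := by
  refine ge_of_tendsto ((hasDerivAt_iff_tendsto_slope.1 hg).mono_left
    (nhdsGT_le_nhdsNE x)) ?_
  filter_upwards [self_mem_nhdsWithin] with y hy
  rw [slope_def_field]
  exact div_nonneg (sub_nonneg.2 (hmin y hy)) (sub_nonneg.2 hy.le)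

lemma pos_of_forall_sum_rpow_le (ha : ∀ i ∈ s, 0 < a i) (hb : ∀ i ∈ s, 0 ≤ b i)
    (hab : ∀ p : ℝ, 0 < p → ∑ i ∈ s, a i ^ p ≤ ∑ i ∈ s, b i ^ p) : ∀ i ∈ s, 0 < b i := by
  set t := s.filter fun i => 0 < b i
  have htb : ∀ i ∈ t, 0 < b i := fun i hi => (mem_filter.1 hi).2
  have hsum : ∀ p : ℝ, 0 < p → ∑ i ∈ s, b i ^ p = ∑ i ∈ t, b i ^ p := fun p hp =>
    (sum_filter_of_ne fun i hi hbi => (hb i hi).lt_of_ne fun h =>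
      hbi (by rw [← h, zero_rpow hp.ne'])).symm
  have hlimit : ∀ {x : ι → ℝ} {r : Finset ι}, (∀ i ∈ r, 0 < x i) →
      Tendsto (fun p : ℝ => ∑ i ∈ r, x i ^ p) (𝓝[>] 0) (𝓝 #r) := fun hx => by
    simpa using (hasDerivAt_sum_rpow_zero hx).continuousAt.tendsto.mono_left nhdsWithin_le_nhds
  have hcard : #s ≤ #t := by
    refine Nat.cast_le.1 (le_of_tendsto_of_tendsto (hlimit ha) (hlimit htb) ?_)
    filter_upwards [self_mem_nhdsWithin] with p hp
    exact (hab p hp).trans_eq (hsum p hp)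
  rw [← eq_of_subset_of_card_le (filter_subset _ s) hcard]
  exact htb

lemma sum_log_le_of_forall_sum_rpow_le (ha : ∀ i ∈ s, 0 < a i) (hb : ∀ i ∈ s, 0 < b i)
    (hab : ∀ p : ℝ, 0 < p → ∑ i ∈ s, a i ^ p ≤ ∑ i ∈ s, b i ^ p) :
    ∑ i ∈ s, log (a i) ≤ ∑ i ∈ s, log (b i) := by
  have hderiv := (hasDerivAt_sum_rpow_zero hb).sub (hasDerivAt_sum_rpow_zero ha)
  refine sub_nonneg.1 (hderiv.nonneg_of_forall_lt_le fun p hp => ?_)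
  simpa using hab p hp

lemma prod_le_prod_of_forall_sum_rpow_le (ha : ∀ i ∈ s, 0 ≤ a i) (hb : ∀ i ∈ s, 0 ≤ b i)
    (hab : ∀ p : ℝ, 0 < p → ∑ i ∈ s, a i ^ p ≤ ∑ i ∈ s, b i ^ p) :
    ∏ i ∈ s, a i ≤ ∏ i ∈ s, b i := by
  by_cases hzero : ∃ i ∈ s, a i = 0
  · obtain ⟨i, hi, hai⟩ := hzero
    rw [prod_eq_zero hi hai]
    exact prod_nonneg hb
  push Not at hzero
  have hapos : ∀ i ∈ s, 0 < a i := fun i hi => (ha i hi).lt_of_ne (hzero i hi).symm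
  have hbpos := pos_of_forall_sum_rpow_le hapos hb hab
  rw [← log_le_log_iff (prod_pos hapos) (prod_pos hbpos), log_prod fun i hi => (hapos i hi).ne',
    log_prod fun i hi => (hbpos i hi).ne']
  exact sum_log_le_of_forall_sum_rpow_le hapos hbpos hab

end Backward

section Padding

variable {d : ℕ}

def padZero (f : Fin d → ℝ) (n : ℕ) : ℝ :=
  if h : n < d then f ⟨n, h⟩ else 0

lemma padZero_val (f : Fin d → ℝ) (i : Fin d) : padZero f i = f i :=
  dif_pos i.isLt

lemma padZero_nonneg {f : Fin d → ℝ} (hf : ∀ i, 0 ≤ f i) (n : ℕ) : 0 ≤ padZero f n := by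
  unfold padZero
  split_ifs
  exacts [hf _, le_rfl]

lemma padZero_antitone {f : Fin d → ℝ} (hf : Antitone f) (hf0 : ∀ i, 0 ≤ f i) :
    Antitone (padZero f) := by
  intro m n hmn
  by_cases hn : n < d
  · rw [padZero, padZero, dif_pos hn, dif_pos (hmn.trans_lt hn)]
    exact hf (Fin.mk_le_mk.2 hmn)
  · rw [padZero, dif_neg hn]
    exact padZero_nonneg hf0 m

@[to_additive]
lemma prod_filter_val_lt_eq_prod_range {M : Type*} [CommMonoid M] (g : ℕ → M) {k : ℕ}
    (hk : k ≤ d) : ∏ i ∈ univ.filter (fun i : Fin d => (i : ℕ) < k), g i = ∏ i ∈ range k, g i := by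
  rw [prod_filter, Fin.prod_univ_eq_prod_range (fun i => if i < k then g i else 1), ← prod_filter]
  congr 1
  ext n
  simp only [mem_filter, mem_range]
  omega

end Padding

lemma eigDesc_antitone {d : ℕ} {A : Matrix (Fin d) (Fin d) ℂ} (hA : A.IsHermitian) :
    Antitone (eigDesc hA) := fun _ _ hij =>
  Tuple.monotone_sort hA.eigenvalues (Fin.rev_le_rev.2 hij)

/-- **Proposition 4.3.** For positive semi-definite `A, B`: `λ(A) ≺_{wlog} λ(B)`
(i.e. `∏_{i<k} λ_i(A) ≤ ∏_{i<k} λ_i(B)` for all `k ∈ [d]`) if and only if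
`‖A^p‖_(k) ≤ ‖B^p‖_(k)` for all `p > 0` and all `k ∈ [d]`, where the Ky Fan `k`-norm of
`X^p` for positive semi-definite `X` is `∑_{i<k} λ_i(X)^p`. -/
theorem weak_log_majorization_iff_kyfan_powers
    {d : ℕ} {A B : Matrix (Fin d) (Fin d) ℂ} (hA : A.PosSemidef) (hB : B.PosSemidef) :
    (∀ k, k ≤ d →
      ∏ i ∈ Finset.univ.filter (fun i : Fin d => (i : ℕ) < k), eigDesc hA.1 i ≤
      ∏ i ∈ Finset.univ.filter (fun i : Fin d => (i : ℕ) < k), eigDesc hB.1 i)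
    ↔ (∀ p : ℝ, 0 < p → ∀ k, k ≤ d →
      ∑ i ∈ Finset.univ.filter (fun i : Fin d => (i : ℕ) < k), eigDesc hA.1 i ^ p ≤
      ∑ i ∈ Finset.univ.filter (fun i : Fin d => (i : ℕ) < k), eigDesc hB.1 i ^ p) := by
  have hA0 : ∀ i, 0 ≤ eigDesc hA.1 i := fun _ => hA.eigenvalues_nonneg _
  have hB0 : ∀ i, 0 ≤ eigDesc hB.1 i := fun _ => hB.eigenvalues_nonneg _
  constructor
  · intro h p hp k hk
    simp only [← padZero_val (eigDesc hA.1), ← padZero_val (eigDesc hB.1)] at h ⊢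
    set a := padZero (eigDesc hA.1)
    set b := padZero (eigDesc hB.1)
    rw [sum_filter_val_lt_eq_sum_range (fun n => a n ^ p) hk,
      sum_filter_val_lt_eq_sum_range (fun n => b n ^ p) hk]
    refine sum_range_rpow_le_of_prod_range_le (padZero_antitone (eigDesc_antitone hA.1) hA0)
      (padZero_nonneg hA0) (padZero_nonneg hB0) hp fun l hl => ?_
    rw [← prod_filter_val_lt_eq_prod_range a (hl.trans hk),
      ← prod_filter_val_lt_eq_prod_range b (hl.trans hk)]
    exact h l (hl.trans hk)
  · exact fun h k hk => prod_le_prod_of_forall_sum_rpow_le (fun i _ => hA0 i) (fun i _ => hB0 i)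
      fun p hp => h p hp k hk
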